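/- If P_{ij} solve the Kolmogorov forward equations with nonnegative transition rates τ_{kj} bounded by τ*, and P_{ij}(0) ∈ [0,1] with Σ_j P_{ij}(0)=1, then P_{ij}(t) ∈ [0,1] for all t ≥ 0. -/

import Mathlib

/-!
The forward system is quasi-positive: if every `P k t ≥ -e` and `P j t = -e`, then the outflow
term `c j t * e` is nonnegative and each inflow term is at least `-e τ*`, so `P j' ≥ -(r τ*) e`.
Hence no coordinate of `P + ε e^{(r τ* + 1) t}` can be the first to reach zero, and letting
`ε → 0` gives `P ≥ 0`. The generator has zero column sums, so `∑ j, P j` stays equal to `1`,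
and a nonnegative vector with sum `1` lies in `[0, 1]`.
-/

open Set

theorem HasDerivAt.nonpos_of_forall_Ioo_le {f : ℝ → ℝ} {f' a b : ℝ} (hf : HasDerivAt f f' b)
    (hab : a < b) (hmin : ∀ t ∈ Ioo a b, f b ≤ f t) : f' ≤ 0 := by
  refine le_of_tendsto ((hasDerivAt_iff_tendsto_slope.1 hf).mono_left (nhdsLT_le_nhdsNE b)) ?_
  filter_upwards [Ioo_mem_nhdsLT hab] with t ht
  rw [slope_def_field]
  exact div_nonpos_of_nonneg_of_nonpos (sub_nonneg.2 (hmin t ht)) (sub_nonpos.2 ht.2.le)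

variable {ι : Type*} [Fintype ι]

theorem exists_first_zero {x : ι → ℝ → ℝ} (hx : ∀ j, ContinuousOn (x j) (Ici 0))
    (h0 : ∀ j, 0 < x j 0) {j₁ : ι} {t₁ : ℝ} (ht₁ : 0 ≤ t₁) (hj₁ : x j₁ t₁ ≤ 0) :
    ∃ t₀ > 0, ∃ j₀, x j₀ t₀ = 0 ∧ (∀ k, ∀ t ∈ Ico 0 t₀, 0 < x k t) ∧ ∀ k, 0 ≤ x k t₀ := by
  set S := ⋃ j, Icc 0 t₁ ∩ x j ⁻¹' Iic 0
  have hS : IsClosed S := isClosed_iUnion_of_finite fun j =>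
    ((hx j).mono Icc_subset_Ici_self).preimage_isClosed_of_isClosed isClosed_Icc isClosed_Iic
  have hSbdd : BddBelow S := ⟨0, fun t ht => by obtain ⟨j, hj⟩ := mem_iUnion.1 ht; exact hj.1.1⟩
  have hSne : S.Nonempty := ⟨t₁, mem_iUnion.2 ⟨j₁, ⟨ht₁, le_rfl⟩, hj₁⟩⟩
  obtain ⟨j₀, ht₀, hj₀⟩ := mem_iUnion.1 (hS.csInf_mem hSne hSbdd)
  set t₀ := sInf S
  have hbefore : ∀ k, ∀ t ∈ Ico 0 t₀, 0 < x k t := fun k t ht => by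
    by_contra! hk
    exact (csInf_le hSbdd (mem_iUnion.2 ⟨k, ⟨ht.1, ht.2.le.trans ht₀.2⟩, hk⟩)).not_gt ht.2
  have ht₀pos : 0 < t₀ := ht₀.1.lt_of_ne fun h => (h0 j₀).not_ge (h ▸ hj₀)
  have hat : ∀ k, 0 ≤ x k t₀ := fun k => by
    have hcont := ((hx k t₀ ht₀.1).continuousAt (Ici_mem_nhds ht₀pos)).tendsto
    refine ge_of_tendsto (hcont.mono_left (nhdsWithin_le_nhds (s := Iio t₀))) ?_
    filter_upwards [Ioo_mem_nhdsLT ht₀pos] with t ht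
    exact (hbefore k t ⟨ht.1.le, ht.2⟩).le
  exact ⟨t₀, ht₀pos, j₀, le_antisymm hj₀ (hat j₀), hbefore, hat⟩

theorem pos_of_deriv_pos_of_eq_zero {x x' : ι → ℝ → ℝ}
    (hx : ∀ j t, 0 ≤ t → HasDerivAt (x j) (x' j t) t) (h0 : ∀ j, 0 < x j 0)
    (hbdry : ∀ j t, 0 ≤ t → (∀ k, 0 ≤ x k t) → x j t = 0 → 0 < x' j t) :
    ∀ j t, 0 ≤ t → 0 < x j t := by
  intro j t ht
  by_contra! hneg
  have hcont (k : ι) : ContinuousOn (x k) (Ici 0) := fun s hs =>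
    (hx k s hs).continuousAt.continuousWithinAt
  obtain ⟨t₀, ht₀, j₀, hzero, hbefore, hat⟩ := exists_first_zero hcont h0 ht hneg
  have hderiv_nonpos : x' j₀ t₀ ≤ 0 := (hx j₀ t₀ ht₀.le).nonpos_of_forall_Ioo_le ht₀
    fun s hs => hzero ▸ (hbefore j₀ s ⟨hs.1.le, hs.2⟩).le
  exact (hbdry j₀ t₀ ht₀.le hat hzero).not_ge hderiv_nonpos

theorem nonneg_of_deriv_ge_of_eq_neg {x x' : ι → ℝ → ℝ} (L : ℝ)
    (hx : ∀ j t, 0 ≤ t → HasDerivAt (x j) (x' j t) t) (h0 : ∀ j, 0 ≤ x j 0)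
    (hbdry : ∀ j t e, 0 ≤ t → 0 < e → (∀ k, -e ≤ x k t) → x j t = -e → -(L * e) ≤ x' j t) :
    ∀ j t, 0 ≤ t → 0 ≤ x j t := by
  have hpert : ∀ ε > 0, ∀ j t, 0 ≤ t → 0 < x j t + ε * Real.exp ((L + 1) * t) := by
    intro ε hε
    refine pos_of_deriv_pos_of_eq_zero
      (x' := fun j t => x' j t + ε * (Real.exp ((L + 1) * t) * (L + 1)))
      (fun j t ht => ?_) (fun j => ?_) (fun j t ht hall hj => ?_)
    · simpa using (hx j t ht).fun_add (((hasDerivAt_id t).const_mul (L + 1)).exp.const_mul ε)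
    · simpa using add_pos_of_nonneg_of_pos (h0 j) hε
    · have he : 0 < ε * Real.exp ((L + 1) * t) := by positivity
      have := hbdry j t _ ht he (fun k => by linarith [hall k]) (by linarith)
      linarith
  intro j t ht
  refine le_of_forall_pos_lt_add fun δ hδ => ?_
  have := hpert (δ / Real.exp ((L + 1) * t)) (by positivity) j t ht
  rwa [div_mul_cancel₀ _ (Real.exp_pos _).ne'] at this

/-- The `j`-th entry of `p Q`, where the generator `Q` has off-diagonal entries `q` and row sums
zero; the diagonal of `q` cancels out. -/
def kolmogorovForwardField (q : ι → ι → ℝ) (p : ι → ℝ) (j : ι) : ℝ :=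
  -(∑ k, q j k) * p j + ∑ k, p k * q k j

theorem sum_kolmogorovForwardField (q : ι → ι → ℝ) (p : ι → ℝ) :
    ∑ j, kolmogorovForwardField q p j = 0 := by
  simp only [kolmogorovForwardField, Finset.sum_add_distrib, neg_mul, Finset.sum_neg_distrib,
    Finset.sum_mul]
  rw [neg_add_eq_zero, Finset.sum_comm]
  exact Finset.sum_congr rfl fun j _ => Finset.sum_congr rfl fun k _ => mul_comm _ _

theorem neg_mul_le_kolmogorovForwardField {q : ι → ι → ℝ} {p : ι → ℝ} {M e : ℝ} {j : ι}
    (hq : ∀ k l, 0 ≤ q k l) (hM : ∀ k l, q k l ≤ M) (he : 0 ≤ e) (hp : ∀ k, -e ≤ p k)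
    (hj : p j = -e) : -(Fintype.card ι * M * e) ≤ kolmogorovForwardField q p j := by
  have hout : 0 ≤ -(∑ k, q j k) * p j := by
    rw [hj, neg_mul_neg]
    exact mul_nonneg (Finset.sum_nonneg fun k _ => hq j k) he
  calc -(Fintype.card ι * M * e) = ∑ _k : ι, -e * M := by
        rw [Finset.sum_const, Finset.card_univ, nsmul_eq_mul]; ring
    _ ≤ ∑ k, p k * q k j := Finset.sum_le_sum fun k _ => by nlinarith [hp k, hq k j, hM k j]
    _ ≤ kolmogorovForwardField q p j := by
      rw [kolmogorovForwardField]
      linarith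

theorem sum_eq_of_hasDerivAt_kolmogorovForwardField {x : ι → ℝ → ℝ} {q : ℝ → ι → ι → ℝ}
    (hx : ∀ j t, 0 ≤ t → HasDerivAt (x j) (kolmogorovForwardField (q t) (fun k => x k t) j) t)
    {t : ℝ} (ht : 0 ≤ t) : ∑ j, x j t = ∑ j, x j 0 := by
  have hsum (s : ℝ) (hs : 0 ≤ s) : HasDerivAt (fun u => ∑ j, x j u) 0 s := by
    simpa [sum_kolmogorovForwardField] using
      HasDerivAt.fun_sum (u := Finset.univ) fun j _ => hx j s hs
  exact constant_of_has_deriv_right_zero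
    (fun s hs => (hsum s hs.1).continuousAt.continuousWithinAt)
    (fun s hs => (hsum s hs.1).hasDerivWithinAt) t ⟨ht, le_rfl⟩

theorem kolmogorov_probabilities_mem_unit_interval_general
    (r : ℕ)
    (τ : Fin r → Fin r → ℝ → ℝ) (c : Fin r → ℝ → ℝ) (τstar : ℝ)
    (hτnonneg : ∀ j k t, 0 ≤ t → 0 ≤ τ j k t)
    (hτbound : ∀ j k t, 0 ≤ t → τ j k t ≤ τstar)
    (hτdiag : ∀ j t, τ j j t = 0)
    (hc : ∀ j t, c j t = ∑ k ∈ Finset.univ.erase j, τ j k t)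
    (P : Fin r → ℝ → ℝ)
    (hode : ∀ j t, 0 ≤ t →
      HasDerivAt (P j) (- c j t * P j t + ∑ k, P k t * τ k j t) t)
    (hinit01 : ∀ j, P j 0 ∈ Set.Icc (0 : ℝ) 1)
    (hinitsum : ∑ j, P j 0 = 1) :
    ∀ j t, 0 ≤ t → P j t ∈ Set.Icc (0 : ℝ) 1 := by
  have hc' (j : Fin r) (t : ℝ) : c j t = ∑ k, τ j k t :=
    (hc j t).trans (Finset.sum_erase _ (hτdiag j t))
  have hP (j : Fin r) (t : ℝ) (ht : 0 ≤ t) : HasDerivAt (P j)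
      (kolmogorovForwardField (fun k l => τ k l t) (fun k => P k t) j) t := by
    simpa only [kolmogorovForwardField, hc'] using hode j t ht
  have hnonneg : ∀ j t, 0 ≤ t → 0 ≤ P j t :=
    nonneg_of_deriv_ge_of_eq_neg (r * τstar) hP (fun j => (hinit01 j).1)
      fun j t e ht he hall hj => by
        simpa using neg_mul_le_kolmogorovForwardField (hτnonneg · · t ht) (hτbound · · t ht)
          he.le hall hj
  intro j t ht
  have hsum : ∑ k, P k t = 1 :=
    (sum_eq_of_hasDerivAt_kolmogorovForwardField (q := fun t k l => τ k l t) hP ht).trans hinitsum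
  exact ⟨hnonneg j t ht,
    hsum ▸ Finset.single_le_sum (fun k _ => hnonneg k t ht) (Finset.mem_univ j)⟩

/-- Solutions of the Kolmogorov forward equations with nonnegative bounded transition
rates and probabilistic initial data stay in `[0,1]`. -/
theorem kolmogorov_probabilities_mem_unit_interval
    (r : ℕ) (hr : 1 ≤ r)
    (τ : Fin r → Fin r → ℝ → ℝ) (c : Fin r → ℝ → ℝ) (τstar : ℝ)
    (hτcont : ∀ j k, Continuous (τ j k))
    (hτnonneg : ∀ j k t, 0 ≤ t → 0 ≤ τ j k t)
    (hτbound : ∀ j k t, 0 ≤ t → τ j k t ≤ τstar)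
    (hτdiag : ∀ j t, τ j j t = 0)
    (hc : ∀ j t, c j t = ∑ k ∈ Finset.univ.erase j, τ j k t)
    (P : Fin r → ℝ → ℝ)
    (hode : ∀ j t, 0 ≤ t →
      HasDerivAt (P j) (- c j t * P j t + ∑ k, P k t * τ k j t) t)
    (hinit01 : ∀ j, P j 0 ∈ Set.Icc (0 : ℝ) 1)
    (hinitsum : ∑ j, P j 0 = 1) :
    ∀ j t, 0 ≤ t → P j t ∈ Set.Icc (0 : ℝ) 1 :=
  kolmogorov_probabilities_mem_unit_interval_general r τ c τstar hτnonneg hτbound hτdiag hc P hode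
    hinit01 hinitsum
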